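/- The strong odd chromatic number of I_y(G_8, G_8) equals 17. -/

import Mathlib

open SimpleGraph

/-- A coloring `φ` of the vertices of `G` is a strong odd coloring if it is proper and,
for every vertex `v` and every color `c`, the number of neighbors of `v` colored `c`
is either zero or odd. -/
def IsStrongOddColoring {V α : Type*} (G : SimpleGraph V) (φ : V → α) : Prop :=
  (∀ u v : V, G.Adj u v → φ u ≠ φ v) ∧
  ∀ (v : V) (c : α),
    {u : V | G.Adj v u ∧ φ u = c}.ncard = 0 ∨ Odd {u : V | G.Adj v u ∧ φ u = c}.ncard

/-- The strong odd chromatic number: the least `k` such that `G` admits a strong odd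
coloring with `k` colors. -/
noncomputable def strongOddChromaticNumber {V : Type*} (G : SimpleGraph V) : ℕ :=
  sInf {k : ℕ | ∃ φ : V → Fin k, IsStrongOddColoring G φ}

/-- The join `G ∨ H` of two graphs: disjoint copies of `G` and `H` together with all
edges between them. -/
def joinGraph {V W : Type*} (G : SimpleGraph V) (H : SimpleGraph W) :
    SimpleGraph (V ⊕ W) where
  Adj x y :=
    match x, y with
    | Sum.inl a, Sum.inl b => G.Adj a b
    | Sum.inl _, Sum.inr _ => True
    | Sum.inr _, Sum.inl _ => True
    | Sum.inr a, Sum.inr b => H.Adj a b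
  symm := ⟨by rintro (a | a) (b | b) h <;> first | exact h.symm | trivial⟩
  loopless := ⟨by rintro (a | a) h <;> first | exact G.irrefl h | exact H.irrefl h⟩

/-- The wheel graph `W_n = C_n ∨ K_1`. -/
def wheelGraph (n : ℕ) : SimpleGraph (Fin n ⊕ Fin 1) :=
  joinGraph (cycleGraph n) (⊥ : SimpleGraph (Fin 1))

/-- `G_n = C_n ∨ K̄_2`; the two vertices of `K̄_2` are `x_n = Sum.inr 0` and
`y_n = Sum.inr 1`. -/
def cycleJoinTwo (n : ℕ) : SimpleGraph (Fin n ⊕ Fin 2) :=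
  joinGraph (cycleGraph n) (⊥ : SimpleGraph (Fin 2))

/-- The one point union of graphs `G` and `H`, obtained by identifying the vertex
`a` of `G` with the vertex `b` of `H` (the identified vertex is `Sum.inl a`). -/
def onePointUnion {V W : Type*} (G : SimpleGraph V) (H : SimpleGraph W) (a : V) (b : W) :
    SimpleGraph (V ⊕ {w : W // w ≠ b}) where
  Adj x y :=
    match x, y with
    | Sum.inl u, Sum.inl v => G.Adj u v
    | Sum.inl u, Sum.inr v => u = a ∧ H.Adj b v.1
    | Sum.inr v, Sum.inl u => u = a ∧ H.Adj b v.1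
    | Sum.inr u, Sum.inr v => H.Adj u.1 v.1
  symm := ⟨by
    rintro (u | u) (v | v) h
    · exact h.symm
    · exact h
    · exact h
    · exact h.symm⟩
  loopless := ⟨by
    rintro (u | u) h
    · exact G.irrefl h
    · exact H.irrefl h⟩

/-- `I_y(G_m, G_n)`: the one point union of `G_m = C_m ∨ K̄_2` and `G_n = C_n ∨ K̄_2`
obtained by identifying the vertices `y_m` and `y_n`. -/
def Iy (m n : ℕ) :
    SimpleGraph ((Fin m ⊕ Fin 2) ⊕ {w : Fin n ⊕ Fin 2 // w ≠ Sum.inr 1}) :=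
  onePointUnion (cycleJoinTwo m) (cycleJoinTwo n) (Sum.inr 1) (Sum.inr 1)

/-- A planar embedding of a graph `G`: an injective placement of the vertices in the
plane together with, for each edge, an arc (injective path) joining the images of its
endpoints, such that arcs do not pass through images of other vertices and two arcs of
distinct edges meet only in common endpoints. -/
structure PlanarEmbedding {V : Type*} (G : SimpleGraph V) where
  vmap : V → ℝ × ℝ
  vmap_inj : Function.Injective vmap
  arc : ∀ u v : V, G.Adj u v → Path (vmap u) (vmap v)
  arc_symm : ∀ (u v : V) (h : G.Adj u v), arc v u h.symm = (arc u v h).symm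
  arc_inj : ∀ (u v : V) (h : G.Adj u v), Function.Injective (arc u v h)
  arc_vertex : ∀ (u v : V) (h : G.Adj u v) (w : V),
    vmap w ∈ Set.range (arc u v h) → w = u ∨ w = v
  arc_disjoint : ∀ (u v u' v' : V) (h : G.Adj u v) (h' : G.Adj u' v'),
    s(u, v) ≠ s(u', v') →
    Set.range (arc u v h) ∩ Set.range (arc u' v' h') ⊆
      ({vmap u, vmap v} ∩ {vmap u', vmap v'} : Set (ℝ × ℝ))

/-- A graph is planar if it admits a planar embedding. -/
def IsPlanar {V : Type*} (G : SimpleGraph V) : Prop :=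
  Nonempty (PlanarEmbedding G)

/-! In a strong odd coloring no color occurs exactly twice in a neighborhood. Around a hub `x`,
a repeated rim color would therefore occur at least three times on the `8`-cycle, so two of its
occurrences are at distance one or two: distance one contradicts properness, and at distance two
the vertex in between sees that color exactly twice. Around the apex `y`, which sees both rims, a
repeated color would need a third occurrence, putting two occurrences on the same rim. So `y` and
its `16` neighbors get `17` distinct colors. Conversely, coloring the rims with `16` colors, `y`
with a `17`th and each hub with a rim color of the other copy is a strong odd coloring. -/

section Decidable

variable {V W : Type*}

instance (G : SimpleGraph V) (H : SimpleGraph W) [DecidableRel G.Adj] [DecidableRel H.Adj] :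
    DecidableRel (joinGraph G H).Adj
  | Sum.inl a, Sum.inl b => inferInstanceAs (Decidable (G.Adj a b))
  | Sum.inl _, Sum.inr _ => .isTrue trivial
  | Sum.inr _, Sum.inl _ => .isTrue trivial
  | Sum.inr a, Sum.inr b => inferInstanceAs (Decidable (H.Adj a b))

instance (G : SimpleGraph V) (H : SimpleGraph W) (a : V) (b : W) [DecidableEq V]
    [DecidableRel G.Adj] [DecidableRel H.Adj] : DecidableRel (onePointUnion G H a b).Adj
  | Sum.inl u, Sum.inl v => inferInstanceAs (Decidable (G.Adj u v))
  | Sum.inl u, Sum.inr v => inferInstanceAs (Decidable (u = a ∧ H.Adj b v.1))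
  | Sum.inr v, Sum.inl u => inferInstanceAs (Decidable (u = a ∧ H.Adj b v.1))
  | Sum.inr u, Sum.inr v => inferInstanceAs (Decidable (H.Adj u.1 v.1))

instance (n : ℕ) : DecidableRel (cycleJoinTwo n).Adj :=
  inferInstanceAs (DecidableRel (joinGraph _ _).Adj)

instance (m n : ℕ) : DecidableRel (Iy m n).Adj :=
  inferInstanceAs (DecidableRel (onePointUnion _ _ _ _).Adj)

end Decidable

theorem isStrongOddColoring_iff_card_filter {V α : Type*} [Fintype V] (G : SimpleGraph V)
    [DecidableRel G.Adj] [DecidableEq α] (φ : V → α) :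
    IsStrongOddColoring G φ ↔ (∀ u v, G.Adj u v → φ u ≠ φ v) ∧
      ∀ v c, (Finset.univ.filter fun u => G.Adj v u ∧ φ u = c).card = 0 ∨
        Odd (Finset.univ.filter fun u => G.Adj v u ∧ φ u = c).card := by
  simp only [IsStrongOddColoring, ← Set.ncard_coe_finset, Finset.coe_filter, Finset.mem_univ,
    true_and]

theorem fin_eight_exists_mem_add_one_or_add_two_mem :
    ∀ a b c : Fin 8, a ≠ b → a ≠ c → b ≠ c →
      ∃ p ∈ [a, b, c], p + 1 ∈ [a, b, c] ∨ p + 2 ∈ [a, b, c] := by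
  decide

namespace IsStrongOddColoring

variable {V α : Type*} {G : SimpleGraph V} {φ : V → α}

theorem ncard_ne_two (h : IsStrongOddColoring G φ) (v : V) (c : α) :
    {u | G.Adj v u ∧ φ u = c}.ncard ≠ 2 := by
  intro h2
  rcases h.2 v c with h0 | hodd
  · omega
  · rw [h2] at hodd
    exact Nat.not_odd_iff_even.mpr even_two hodd

theorem exists_adj_apply_eq_of_apply_eq (h : IsStrongOddColoring G φ) {v a b : V}
    (ha : G.Adj v a) (hb : G.Adj v b) (hab : a ≠ b) (hc : φ a = φ b) :
    ∃ w, G.Adj v w ∧ φ w = φ a ∧ w ≠ a ∧ w ≠ b := by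
  by_contra! hnone
  apply h.ncard_ne_two v (φ a)
  have hclass : {u | G.Adj v u ∧ φ u = φ a} = {a, b} := by
    ext w
    simp only [Set.mem_ofPred_eq, Set.mem_insert_iff, Set.mem_singleton_iff]
    constructor
    · rintro ⟨hw, hwc⟩
      by_contra! hne
      exact hne.2 (hnone w hw hwc hne.1)
    · rintro (rfl | rfl)
      exacts [⟨ha, rfl⟩, ⟨hb, hc.symm⟩]
  rw [hclass, Set.ncard_pair hab]

theorem apply_ne_of_forall_adj (h : IsStrongOddColoring G φ) {v a b : V}
    (ha : G.Adj v a) (hb : G.Adj v b) (hab : a ≠ b)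
    (hrest : ∀ w, G.Adj v w → w = a ∨ w = b ∨ G.Adj w b) : φ a ≠ φ b := by
  intro hc
  obtain ⟨w, hw, hwc, hwa, hwb⟩ := h.exists_adj_apply_eq_of_apply_eq ha hb hab hc
  exact h.1 w b (((hrest w hw).resolve_left hwa).resolve_left hwb) (hwc.trans hc)

theorem injOn_neighborSet_of_subset_union (h : IsStrongOddColoring G φ) {v : V} {A B : Set V}
    (hN : G.neighborSet v ⊆ A ∪ B) (hA : Set.InjOn φ A) (hB : Set.InjOn φ B) :
    Set.InjOn φ (G.neighborSet v) := by
  intro a ha b hb hab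
  by_contra hne
  obtain ⟨w, hw, hwa, hwa_ne, hwb_ne⟩ := h.exists_adj_apply_eq_of_apply_eq ha hb hne hab
  have hwb : φ w = φ b := hwa.trans hab
  -- two of the three vertices `a`, `b`, `w` of one color lie in the same part
  rcases hN ha with ha | ha <;> rcases hN hb with hb | hb <;> rcases hN hw with hw | hw <;>
    first
    | exact hne (hA ha hb hab) | exact hne (hB ha hb hab)
    | exact hwa_ne (hA hw ha hwa) | exact hwa_ne (hB hw ha hwa)
    | exact hwb_ne (hA hw hb hwb) | exact hwb_ne (hB hw hb hwb)

theorem injOn_insert_neighborSet (h : IsStrongOddColoring G φ) {v : V}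
    (hN : Set.InjOn φ (G.neighborSet v)) : Set.InjOn φ (insert v (G.neighborSet v)) := by
  refine (Set.injOn_insert (G.loopless.irrefl v)).mpr ⟨hN, ?_⟩
  rintro ⟨u, hu, hc⟩
  exact h.1 v u hu hc.symm

theorem injOn_neighborSet_of_hub (h : IsStrongOddColoring G φ) {emb : Fin 8 → V}
    (hemb : Function.Injective emb) {x : V} (hx : G.neighborSet x = Set.range emb)
    (hcycle : ∀ i, G.Adj (emb i) (emb (i + 1)))
    (hrest : ∀ i w, G.Adj (emb (i + 1)) w →
      w = emb i ∨ w = emb (i + 2) ∨ G.Adj w (emb (i + 2))) :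
    Set.InjOn φ (G.neighborSet x) := by
  have hclose : ∀ p q, q = p + 1 ∨ q = p + 2 → φ (emb p) ≠ φ (emb q) := by
    rintro p q (rfl | rfl)
    · exact h.1 _ _ (hcycle p)
    · refine h.apply_ne_of_forall_adj (v := emb (p + 1)) (hcycle p).symm ?_
        (hemb.ne (by revert p; decide)) (hrest p)
      simpa [add_assoc, one_add_one_eq_two] using hcycle (p + 1)
  rw [hx]
  rintro _ ⟨a, rfl⟩ _ ⟨b, rfl⟩ hab
  by_contra hne
  have hxa : G.Adj x (emb a) := by simp [← mem_neighborSet, hx]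
  have hxb : G.Adj x (emb b) := by simp [← mem_neighborSet, hx]
  obtain ⟨w, hw, hwa, hwa_ne, hwb_ne⟩ := h.exists_adj_apply_eq_of_apply_eq hxa hxb hne hab
  obtain ⟨c, rfl⟩ : w ∈ Set.range emb := hx ▸ hw
  have hcol : ∀ r ∈ [a, b, c], φ (emb r) = φ (emb a) := by
    simp only [List.mem_cons, List.not_mem_nil, or_false]
    rintro r (rfl | rfl | rfl)
    exacts [rfl, hab.symm, hwa]
  obtain ⟨p, hp, hq⟩ := fin_eight_exists_mem_add_one_or_add_two_mem a b c
    (fun e => hne (congrArg emb e)) (fun e => hwa_ne (congrArg emb e.symm))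
    (fun e => hwb_ne (congrArg emb e.symm))
  rcases hq with hq | hq
  · exact hclose p _ (.inl rfl) ((hcol p hp).trans (hcol _ hq).symm)
  · exact hclose p _ (.inr rfl) ((hcol p hp).trans (hcol _ hq).symm)

end IsStrongOddColoring

namespace Iy

abbrev Vertex (m n : ℕ) := (Fin m ⊕ Fin 2) ⊕ {w : Fin n ⊕ Fin 2 // w ≠ Sum.inr 1}

variable {m n : ℕ}

def leftRim (i : Fin m) : Vertex m n := Sum.inl (Sum.inl i)

def rightRim (j : Fin n) : Vertex m n := Sum.inr ⟨Sum.inl j, Sum.inl_ne_inr⟩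

def leftHub : Vertex m n := Sum.inl (Sum.inr 0)

def rightHub : Vertex m n := Sum.inr ⟨Sum.inr 0, by simp⟩

def apex : Vertex m n := Sum.inl (Sum.inr 1)

def coloring17 : Vertex 8 8 → Fin 17
  | .inl (.inl i) => ⟨i, by omega⟩
  | .inl (.inr 0) => ⟨8, by omega⟩
  | .inl (.inr 1) => 16
  | .inr ⟨.inl j, _⟩ => ⟨8 + j, by omega⟩
  | .inr ⟨.inr _, _⟩ => 0

theorem isStrongOddColoring_coloring17 : IsStrongOddColoring (Iy 8 8) coloring17 := by
  rw [isStrongOddColoring_iff_card_filter]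
  decide

theorem leftRim_injective : Function.Injective (leftRim : Fin m → Vertex m n) := by
  intro i j h
  simpa [leftRim] using h

theorem rightRim_injective : Function.Injective (rightRim : Fin n → Vertex m n) := by
  intro i j h
  simpa [rightRim] using h

theorem neighborSet_leftHub : (Iy 8 8).neighborSet leftHub = Set.range leftRim := by
  ext u
  revert u
  decide

theorem neighborSet_rightHub : (Iy 8 8).neighborSet rightHub = Set.range rightRim := by
  ext u
  revert u
  decide

theorem neighborSet_apex_subset :
    (Iy 8 8).neighborSet apex ⊆ (Iy 8 8).neighborSet leftHub ∪ (Iy 8 8).neighborSet rightHub := by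
  intro u
  revert u
  decide

theorem adj_leftRim_add_one (i : Fin 8) : (Iy 8 8).Adj (leftRim i) (leftRim (i + 1)) := by
  revert i
  decide

theorem adj_rightRim_add_one (i : Fin 8) : (Iy 8 8).Adj (rightRim i) (rightRim (i + 1)) := by
  revert i
  decide

theorem eq_or_eq_or_adj_of_adj_leftRim_add_one (i : Fin 8) (w : Vertex 8 8)
    (hw : (Iy 8 8).Adj (leftRim (i + 1)) w) :
    w = leftRim i ∨ w = leftRim (i + 2) ∨ (Iy 8 8).Adj w (leftRim (i + 2)) := by
  revert i w
  decide

theorem eq_or_eq_or_adj_of_adj_rightRim_add_one (i : Fin 8) (w : Vertex 8 8)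
    (hw : (Iy 8 8).Adj (rightRim (i + 1)) w) :
    w = rightRim i ∨ w = rightRim (i + 2) ∨ (Iy 8 8).Adj w (rightRim (i + 2)) := by
  revert i w
  decide

theorem ncard_insert_apex_neighborSet :
    (insert apex ((Iy 8 8).neighborSet apex)).ncard = 17 := by
  have hfilter : insert apex ((Iy 8 8).neighborSet apex) =
      ↑(Finset.univ.filter fun u => u = apex ∨ (Iy 8 8).Adj apex u) := by
    ext u
    simp
  rw [hfilter, Set.ncard_coe_finset]
  decide

theorem seventeen_le_of_isStrongOddColoring {k : ℕ} {φ : Vertex 8 8 → Fin k}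
    (h : IsStrongOddColoring (Iy 8 8) φ) : 17 ≤ k := by
  have hleft := h.injOn_neighborSet_of_hub leftRim_injective neighborSet_leftHub
    adj_leftRim_add_one eq_or_eq_or_adj_of_adj_leftRim_add_one
  have hright := h.injOn_neighborSet_of_hub rightRim_injective neighborSet_rightHub
    adj_rightRim_add_one eq_or_eq_or_adj_of_adj_rightRim_add_one
  have hapex := h.injOn_insert_neighborSet
    (h.injOn_neighborSet_of_subset_union neighborSet_apex_subset hleft hright)
  calc 17 = (insert apex ((Iy 8 8).neighborSet apex)).ncard := ncard_insert_apex_neighborSet.symm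
    _ ≤ (Set.univ : Set (Fin k)).ncard :=
      Set.ncard_le_ncard_of_injOn φ (fun _ _ => Set.mem_univ _) hapex
    _ = k := by simp

end Iy

/-- The strong odd chromatic number of `I_y(G_8, G_8)` equals `17`. -/
theorem stmt_14 : strongOddChromaticNumber (Iy 8 8) = 17 := by
  have h17 : 17 ∈ {k | ∃ φ : Iy.Vertex 8 8 → Fin k, IsStrongOddColoring (Iy 8 8) φ} :=
    ⟨_, Iy.isStrongOddColoring_coloring17⟩
  refine le_antisymm (Nat.sInf_le h17) (le_csInf ⟨17, h17⟩ ?_)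
  rintro k ⟨φ, hφ⟩
  exact Iy.seventeen_le_of_isStrongOddColoring hφ
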